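/- Let V = ℝ^{2N} (N ≥ 1) with its Euclidean inner product, J an orthogonal complex structure on V, and R any algebraic curvature tensor on V. If H(v) ≤ (3s* + s)/(4N(N+1)) for every unit vector v ∈ V (or alternatively H(v) ≥ (3s* + s)/(4N(N+1)) for every unit vector v), then H(v) = (3s* + s)/(4N(N+1)) for every unit vector v ∈ V. -/

import Mathlib

open MeasureTheory RealInnerProductSpace

noncomputable section

/-- An algebraic curvature tensor on a real inner product space: a 4-linear map
with the usual antisymmetries, pair symmetry and first Bianchi identity. -/
structure AlgCurvatureTensor (E : Type*) [NormedAddCommGroup E] [InnerProductSpace ℝ E] where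
  R : E → E → E → E → ℝ
  add_fst : ∀ x x' y z w, R (x + x') y z w = R x y z w + R x' y z w
  smul_fst : ∀ (c : ℝ) x y z w, R (c • x) y z w = c * R x y z w
  add_snd : ∀ x y y' z w, R x (y + y') z w = R x y z w + R x y' z w
  smul_snd : ∀ (c : ℝ) x y z w, R x (c • y) z w = c * R x y z w
  add_trd : ∀ x y z z' w, R x y (z + z') w = R x y z w + R x y z' w
  smul_trd : ∀ (c : ℝ) x y z w, R x y (c • z) w = c * R x y z w
  add_fth : ∀ x y z w w', R x y z (w + w') = R x y z w + R x y z w'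
  smul_fth : ∀ (c : ℝ) x y z w, R x y z (c • w) = c * R x y z w
  antisymm₁₂ : ∀ x y z w, R x y z w = - R y x z w
  antisymm₃₄ : ∀ x y z w, R x y z w = - R x y w z
  pair_symm : ∀ x y z w, R x y z w = R z w x y
  bianchi : ∀ x y z w, R x y z w + R y z x w + R z x y w = 0

/-- An orthogonal complex structure on a real inner product space:
`J ∘ J = -id` and `J` preserves the inner product. -/
def IsOrthCplxStructure {E : Type*} [NormedAddCommGroup E] [InnerProductSpace ℝ E]
    (J : E →ₗ[ℝ] E) : Prop :=
  (∀ x, J (J x) = -x) ∧ ∀ x y, (inner ℝ (J x) (J y) : ℝ) = inner ℝ x y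

/-- Kähler symmetry of a curvature tensor with respect to a complex structure `J`:
`R(Jx, Jy, z, w) = R(x, y, z, w)`. -/
def AlgCurvatureTensor.IsKaehler {E : Type*} [NormedAddCommGroup E] [InnerProductSpace ℝ E]
    (T : AlgCurvatureTensor E) (J : E →ₗ[ℝ] E) : Prop :=
  ∀ x y z w, T.R (J x) (J y) z w = T.R x y z w

/-- The `i`-th standard basis vector of Euclidean space `ℝⁿ`. -/
def stdBasis (n : ℕ) (i : Fin n) : EuclideanSpace ℝ (Fin n) := EuclideanSpace.single i 1

/-- The scalar curvature of an algebraic curvature tensor on `ℝⁿ`: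
`s = ∑ i ∑ a R(eᵢ, eₐ, eᵢ, eₐ)`. -/
def scalarCurv {n : ℕ} (T : AlgCurvatureTensor (EuclideanSpace ℝ (Fin n))) : ℝ :=
  ∑ i : Fin n, ∑ a : Fin n, T.R (stdBasis n i) (stdBasis n a) (stdBasis n i) (stdBasis n a)

/-- The star-scalar curvature of an algebraic curvature tensor on `ℝⁿ` with respect to `J`:
`s* = ∑ i ∑ a R(eₐ, J eᵢ, eᵢ, J eₐ)`. -/
def starScalarCurv {n : ℕ} (T : AlgCurvatureTensor (EuclideanSpace ℝ (Fin n)))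
    (J : EuclideanSpace ℝ (Fin n) →ₗ[ℝ] EuclideanSpace ℝ (Fin n)) : ℝ :=
  ∑ i : Fin n, ∑ a : Fin n,
    T.R (stdBasis n a) (J (stdBasis n i)) (stdBasis n i) (J (stdBasis n a))

/-- `R` is Einstein with constant `Λ` if `Ric(x,y) = Λ ⟨x,y⟩`. -/
def AlgCurvatureTensor.IsEinstein {n : ℕ}
    (T : AlgCurvatureTensor (EuclideanSpace ℝ (Fin n))) (Λ : ℝ) : Prop :=
  ∀ x y, (∑ a : Fin n, T.R x (stdBasis n a) y (stdBasis n a)) = Λ * (inner ℝ x y : ℝ)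

/-- The canonical surface measure on the unit sphere of Euclidean space,
obtained from the Lebesgue measure. -/
def sphereMeasure (n : ℕ) : Measure (Metric.sphere (0 : EuclideanSpace ℝ (Fin n)) 1) :=
  (volume : Measure (EuclideanSpace ℝ (Fin n))).toSphere

/-- The Euclidean Laplacian `Δf = ∑ i ∂²f/∂xᵢ²`. -/
def eucLaplacian {n : ℕ} (f : EuclideanSpace ℝ (Fin n) → ℝ) (x : EuclideanSpace ℝ (Fin n)) : ℝ :=
  ∑ i : Fin n, fderiv ℝ (fun y => fderiv ℝ f y (stdBasis n i)) x (stdBasis n i)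

/-! Let `f` be an orthonormal basis of `E` (`n = dim E`) and `uσ = ∑ σᵢ fᵢ` for the `2ⁿ` sign
vectors `σ`. The fourth moments of independent signs are
`𝔼[σᵢσⱼσₖσₗ] = δᵢⱼδₖₗ + δᵢₖδⱼₗ + δᵢₗδⱼₖ - 2δᵢⱼδᵢₖδᵢₗ`, and the three pairings contract
`R(x, Jx, x, Jx)` to `2s*`, `s` and `s*`, so that
`2 ∑ᵢ H(fᵢ) + 2⁻ⁿ ∑_σ H(uσ) = 3s* + s`.
As `‖uσ‖⁴ = n²`, the same weights give `2n + n² = n(n+2)` on the constant `c`, hence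
`2 ∑ᵢ (c - H(fᵢ)) + 2⁻ⁿ ∑_σ (‖uσ‖⁴ c - H(uσ)) = 0` for `c = (3s* + s)/(n(n+2))`.
If `H - c` has constant sign on the unit sphere, all terms vanish; and every unit vector is the
first vector of some orthonormal basis, while `s` and `s*` do not depend on the basis. -/

namespace AlgCurvatureTensor

variable {E : Type*} [NormedAddCommGroup E] [InnerProductSpace ℝ E] (T : AlgCurvatureTensor E)

def toBilin (x z : E) : E →ₗ[ℝ] E →ₗ[ℝ] ℝ :=
  LinearMap.mk₂ ℝ (fun y w => T.R x y z w) (fun y y' w => T.add_snd x y y' z w)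
    (fun c y w => T.smul_snd c x y z w) (fun y w w' => T.add_fth x y z w w')
    (fun c y w => T.smul_fth c x y z w)

@[simp]
theorem toBilin_apply (x y z w : E) : T.toBilin x z y w = T.R x y z w := rfl

@[simp]
theorem R_neg_fth (x y z w : E) : T.R x y z (-w) = -T.R x y z w :=
  (T.toBilin x z y).map_neg w

theorem R_swap (x y z w : E) : T.R x y z w = T.R y x w z := by
  rw [T.antisymm₁₂, T.antisymm₃₄, neg_neg]

theorem R_sum_smul {ι : Type*} [Fintype ι] (a b c d : ι → ℝ) (x y z w : ι → E) :
    T.R (∑ i, a i • x i) (∑ j, b j • y j) (∑ k, c k • z k) (∑ l, d l • w l) =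
      ∑ i, ∑ j, ∑ k, ∑ l, a i * b j * c k * d l * T.R (x i) (y j) (z k) (w l) := by
  have expand₂₄ : ∀ x' z', T.R x' (∑ j, b j • y j) z' (∑ l, d l • w l) =
      ∑ j, ∑ l, b j * d l * T.R x' (y j) z' (w l) := by
    intro x' z'
    rw [← toBilin_apply, Finset.sum_comm]
    simp [Finset.mul_sum, mul_assoc, mul_left_comm]
  have expand₁₃ : ∀ y' w', T.R (∑ i, a i • x i) y' (∑ k, c k • z k) w' =
      ∑ i, ∑ k, a i * c k * T.R (x i) y' (z k) w' := by
    intro y' w'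
    rw [T.R_swap, ← toBilin_apply, Finset.sum_comm]
    simp [Finset.mul_sum, mul_assoc, mul_left_comm, T.R_swap y']
  simp only [expand₁₃, expand₂₄, Finset.mul_sum]
  refine Finset.sum_congr rfl fun i _ => Finset.sum_comm.trans ?_
  refine Finset.sum_congr rfl fun j _ => Finset.sum_congr rfl fun k _ => ?_
  exact Finset.sum_congr rfl fun l _ => by ring

end AlgCurvatureTensor

namespace OrthonormalBasis

variable {E : Type*} [NormedAddCommGroup E] [InnerProductSpace ℝ E]
  {ι κ : Type*} [Fintype ι] [Fintype κ]

theorem sum_bilin_self_eq (F : E →ₗ[ℝ] E →ₗ[ℝ] ℝ) (f : OrthonormalBasis ι ℝ E)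
    (g : OrthonormalBasis κ ℝ E) : ∑ i, F (f i) (f i) = ∑ k, F (g k) (g k) := by
  calc ∑ i, F (f i) (f i) = ∑ i, ∑ k, ⟪g k, f i⟫ * F (g k) (f i) := by
        refine Finset.sum_congr rfl fun i _ => ?_
        nth_rw 1 [← g.sum_repr' (f i)]
        simp
    _ = ∑ k, ∑ i, ⟪f i, g k⟫ * F (g k) (f i) := by
        rw [Finset.sum_comm]
        simp_rw [real_inner_comm]
    _ = ∑ k, F (g k) (g k) := by
        refine Finset.sum_congr rfl fun k _ => ?_
        nth_rw 4 [← f.sum_repr' (g k)]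
        simp

theorem sum_sum_eq_of_symm (S : E → E → ℝ) (hS : ∀ x y, S x y = S y x)
    (F : E → E →ₗ[ℝ] E →ₗ[ℝ] ℝ) (hF : ∀ x y, S x y = F x y y)
    (f : OrthonormalBasis ι ℝ E) (g : OrthonormalBasis κ ℝ E) :
    ∑ i, ∑ j, S (f i) (f j) = ∑ k, ∑ l, S (g k) (g l) := by
  have change_inner : ∀ {ι' κ' : Type _} [Fintype ι'] [Fintype κ'] (x : E)
      (f' : OrthonormalBasis ι' ℝ E) (g' : OrthonormalBasis κ' ℝ E),
      ∑ j, S x (f' j) = ∑ l, S x (g' l) := fun x f' g' => by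
    simpa only [hF] using sum_bilin_self_eq (F x) f' g'
  calc ∑ i, ∑ j, S (f i) (f j) = ∑ i, ∑ l, S (f i) (g l) :=
        Finset.sum_congr rfl fun i _ => change_inner _ f g
    _ = ∑ l, ∑ i, S (g l) (f i) := by rw [Finset.sum_comm]; simp_rw [hS (f _)]
    _ = ∑ k, ∑ l, S (g k) (g l) := Finset.sum_congr rfl fun k _ => change_inner _ f g

theorem exists_apply_eq_of_norm_eq_one (f : OrthonormalBasis ι ℝ E) {v : E} (hv : ‖v‖ = 1) :
    ∃ (g : OrthonormalBasis ι ℝ E) (i : ι), g i = v := by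
  obtain ⟨i⟩ : Nonempty ι := by
    by_contra hempty
    rw [not_nonempty_iff] at hempty
    have : v = 0 := by simpa using (f.sum_repr' v).symm
    simp [this] at hv
  have : FiniteDimensional ℝ E := f.toBasis.finiteDimensional_of_finite
  have hv' : Orthonormal ℝ (({i} : Set ι).domRestrict fun _ => v) :=
    ⟨fun _ => hv, fun j k hjk => absurd (Subtype.ext (j.2.trans k.2.symm)) hjk⟩
  obtain ⟨g, hg⟩ := hv'.exists_orthonormalBasis_extension_of_card_eq
    (Module.finrank_eq_card_basis f.toBasis)
  exact ⟨g, i, hg i rfl⟩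

end OrthonormalBasis

namespace IsOrthCplxStructure

variable {E : Type*} [NormedAddCommGroup E] [InnerProductSpace ℝ E] {J : E →ₗ[ℝ] E}

def toLinearIsometryEquiv (hJ : IsOrthCplxStructure J) : E ≃ₗᵢ[ℝ] E :=
  (LinearEquiv.ofLinearMap J (-J) (by ext x; simp [hJ.1]) (by ext x; simp [hJ.1])).isometryOfInner
    hJ.2

@[simp]
theorem toLinearIsometryEquiv_apply (hJ : IsOrthCplxStructure J) (x : E) :
    hJ.toLinearIsometryEquiv x = J x := rfl

theorem sum_bilin_apply_self {ι : Type*} [Fintype ι] (hJ : IsOrthCplxStructure J)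
    (F : E →ₗ[ℝ] E →ₗ[ℝ] ℝ) (f : OrthonormalBasis ι ℝ E) :
    ∑ i, F (J (f i)) (J (f i)) = ∑ i, F (f i) (f i) := by
  simpa using (f.map hJ.toLinearIsometryEquiv).sum_bilin_self_eq F f

end IsOrthCplxStructure

namespace AlgCurvatureTensor

variable {E : Type*} [NormedAddCommGroup E] [InnerProductSpace ℝ E] (T : AlgCurvatureTensor E)
  {ι κ : Type*} [Fintype ι] [Fintype κ]

def scalarCurvOf (f : OrthonormalBasis ι ℝ E) : ℝ :=
  ∑ i, ∑ a, T.R (f i) (f a) (f i) (f a)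

def starScalarCurvOf (J : E →ₗ[ℝ] E) (f : OrthonormalBasis ι ℝ E) : ℝ :=
  ∑ i, ∑ a, T.R (f a) (J (f i)) (f i) (J (f a))

theorem scalarCurvOf_eq (f : OrthonormalBasis ι ℝ E) (g : OrthonormalBasis κ ℝ E) :
    T.scalarCurvOf f = T.scalarCurvOf g :=
  OrthonormalBasis.sum_sum_eq_of_symm (fun x y => T.R x y x y) (fun x y => T.R_swap x y x y)
    (fun x => T.toBilin x x) (fun _ _ => rfl) f g

theorem starScalarCurvOf_eq (J : E →ₗ[ℝ] E) (f : OrthonormalBasis ι ℝ E)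
    (g : OrthonormalBasis κ ℝ E) : T.starScalarCurvOf J f = T.starScalarCurvOf J g :=
  OrthonormalBasis.sum_sum_eq_of_symm (fun x y => T.R y (J x) x (J y))
    (fun x y => T.pair_symm y (J x) x (J y)) (fun x => -(T.toBilin x (J x) ∘ₗ J))
    (fun x y => by rw [T.pair_symm, T.antisymm₃₄]; rfl) f g

variable {J : E →ₗ[ℝ] E} (hJ : IsOrthCplxStructure J)
include hJ

theorem sum_sum_R_J_eq_scalarCurvOf (f : OrthonormalBasis ι ℝ E) :
    ∑ i, ∑ j, T.R (f i) (J (f j)) (f i) (J (f j)) = T.scalarCurvOf f :=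
  Finset.sum_congr rfl fun i _ => hJ.sum_bilin_apply_self (T.toBilin (f i) (f i)) f

theorem sum_sum_R_J_self_eq_two_mul_starScalarCurvOf (f : OrthonormalBasis ι ℝ E) :
    ∑ i, ∑ j, T.R (f i) (J (f i)) (f j) (J (f j)) = 2 * T.starScalarCurvOf J f := by
  -- Bianchi on `(fᵢ, fⱼ, Jfᵢ, Jfⱼ)`; its first term turns into a `s*` term once the basis `f` is
  -- replaced by `Jf` in the `j`-slots.
  have first : ∀ i, ∑ j, T.R (f i) (f j) (J (f i)) (J (f j)) =
      ∑ j, T.R (f i) (J (f j)) (f j) (J (f i)) := fun i => by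
    calc ∑ j, T.R (f i) (f j) (J (f i)) (J (f j))
        = ∑ j, (T.toBilin (f i) (J (f i))).compl₂ J (f j) (f j) := rfl
      _ = ∑ j, (T.toBilin (f i) (J (f i))).compl₂ J (J (f j)) (J (f j)) :=
        (hJ.sum_bilin_apply_self _ f).symm
      _ = ∑ j, T.R (f i) (J (f j)) (f j) (J (f i)) := by
        simp [hJ.1, T.antisymm₃₄ (f i) (J (f _)) (f _)]
  have bianchi := Finset.sum_congr rfl fun i (_ : i ∈ Finset.univ) =>
    Finset.sum_congr rfl fun j (_ : j ∈ Finset.univ) => T.bianchi (f i) (f j) (J (f i)) (J (f j))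
  simp only [Finset.sum_add_distrib, first, T.antisymm₁₂ (J (f _)), Finset.sum_neg_distrib,
    Finset.sum_const_zero] at bianchi
  rw [Finset.sum_comm] at bianchi
  unfold starScalarCurvOf
  linarith

theorem sum_sum_R_J_sym_eq (f : OrthonormalBasis ι ℝ E) :
    ∑ i, ∑ j, (T.R (f i) (J (f i)) (f j) (J (f j)) + T.R (f i) (J (f j)) (f i) (J (f j)) +
      T.R (f i) (J (f j)) (f j) (J (f i))) = 3 * T.starScalarCurvOf J f + T.scalarCurvOf f := by
  simp only [Finset.sum_add_distrib]
  rw [T.sum_sum_R_J_self_eq_two_mul_starScalarCurvOf hJ, T.sum_sum_R_J_eq_scalarCurvOf hJ,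
    starScalarCurvOf, Finset.sum_comm]
  ring

end AlgCurvatureTensor

theorem scalarCurv_eq_scalarCurvOf {n : ℕ} (T : AlgCurvatureTensor (EuclideanSpace ℝ (Fin n))) :
    scalarCurv T = T.scalarCurvOf (EuclideanSpace.basisFun (Fin n) ℝ) := by
  simp [scalarCurv, AlgCurvatureTensor.scalarCurvOf, stdBasis]

theorem starScalarCurv_eq_starScalarCurvOf {n : ℕ}
    (T : AlgCurvatureTensor (EuclideanSpace ℝ (Fin n)))
    (J : EuclideanSpace ℝ (Fin n) →ₗ[ℝ] EuclideanSpace ℝ (Fin n)) :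
    starScalarCurv T J = T.starScalarCurvOf J (EuclideanSpace.basisFun (Fin n) ℝ) := by
  simp [starScalarCurv, AlgCurvatureTensor.starScalarCurvOf, stdBasis]

def boolSign (b : Bool) : ℝ := if b then 1 else -1

@[simp]
theorem boolSign_mul_self (b : Bool) : boolSign b * boolSign b = 1 := by
  cases b <;> norm_num [boolSign]

theorem sum_boolSign_pow (e : ℕ) : ∑ b, boolSign b ^ e = if Even e then 2 else 0 := by
  rcases Nat.even_or_odd e with he | he
  · simp [boolSign, he.neg_one_pow, he]
  · simp [boolSign, he.neg_one_pow, Nat.not_even_iff_odd.2 he]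

theorem even_indicator_sum_iff {ι : Type*} [DecidableEq ι] (i j k l : ι) :
    (∀ m, Even ((if i = m then 1 else 0) + (if j = m then 1 else 0) +
      (if k = m then 1 else 0) + (if l = m then 1 else 0))) ↔
      (i = j ∧ k = l) ∨ (i = k ∧ j = l) ∨ (i = l ∧ j = k) := by
  constructor
  · intro h
    have hi := h i; have hj := h j; have hk := h k; have hl := h l
    by_cases hij : i = j <;> by_cases hik : i = k <;> by_cases hil : i = l <;>
      by_cases hjk : j = k <;> by_cases hjl : j = l <;> by_cases hkl : k = l <;>
      simp_all [Nat.even_iff]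
    all_goals omega
  · rintro (⟨rfl, rfl⟩ | ⟨rfl, rfl⟩ | ⟨rfl, rfl⟩) m <;> split_ifs <;> simp_all [Nat.even_iff]

section SignCube

variable {ι : Type*} [Fintype ι] [DecidableEq ι]

theorem sum_prod_boolSign_pow (e : ι → ℕ) :
    ∑ σ : ι → Bool, ∏ m, boolSign (σ m) ^ e m =
      if ∀ m, Even (e m) then 2 ^ Fintype.card ι else 0 := by
  rw [← Fintype.prod_sum fun m b => boolSign b ^ e m]
  simp only [sum_boolSign_pow, Fintype.prod_ite_zero, Finset.prod_const, Finset.card_univ]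

theorem sum_boolSign_mul_four (i j k l : ι) :
    ∑ σ : ι → Bool, boolSign (σ i) * boolSign (σ j) * boolSign (σ k) * boolSign (σ l) =
      if (i = j ∧ k = l) ∨ (i = k ∧ j = l) ∨ (i = l ∧ j = k) then 2 ^ Fintype.card ι else 0 := by
  have as_prod : ∀ (σ : ι → Bool) (a : ι),
      boolSign (σ a) = ∏ m, boolSign (σ m) ^ (if a = m then 1 else 0) := fun σ a => by
    simp [pow_ite]
  simp only [as_prod _ i, as_prod _ j, as_prod _ k, as_prod _ l, ← Finset.prod_mul_distrib,
    ← pow_add, sum_prod_boolSign_pow, even_indicator_sum_iff]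

end SignCube

theorem eq_zero_of_sum_add_sum_eq_zero {ι κ : Type*} [Fintype ι] [Fintype κ] {a : ι → ℝ}
    {b : κ → ℝ} (h : ∑ i, a i + ∑ k, b k = 0)
    (hab : (∀ i, 0 ≤ a i) ∧ (∀ k, 0 ≤ b k) ∨ (∀ i, a i ≤ 0) ∧ (∀ k, b k ≤ 0)) (i : ι) :
    a i = 0 := by
  rcases hab with ⟨ha, hb⟩ | ⟨ha, hb⟩
  · have hA : ∑ i, a i = 0 := by
      linarith [Finset.sum_nonneg fun i (_ : i ∈ Finset.univ) => ha i,
        Finset.sum_nonneg fun k (_ : k ∈ Finset.univ) => hb k]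
    exact (Finset.sum_eq_zero_iff_of_nonneg fun i _ => ha i).1 hA i (Finset.mem_univ i)
  · have hA : ∑ i, a i = 0 := by
      linarith [Finset.sum_nonpos fun i (_ : i ∈ Finset.univ) => ha i,
        Finset.sum_nonpos fun k (_ : k ∈ Finset.univ) => hb k]
    exact (Finset.sum_eq_zero_iff_of_nonpos fun i _ => ha i).1 hA i (Finset.mem_univ i)

namespace AlgCurvatureTensor

variable {E : Type*} [NormedAddCommGroup E] [InnerProductSpace ℝ E] (T : AlgCurvatureTensor E)
  {ι : Type*} [Fintype ι]

theorem sum_R_boolSign_smul [DecidableEq ι] (x y : ι → E) :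
    ∑ σ : ι → Bool, T.R (∑ i, boolSign (σ i) • x i) (∑ i, boolSign (σ i) • y i)
        (∑ i, boolSign (σ i) • x i) (∑ i, boolSign (σ i) • y i) =
      2 ^ Fintype.card ι * (∑ i, ∑ j, (T.R (x i) (y i) (x j) (y j) + T.R (x i) (y j) (x i) (y j) +
        T.R (x i) (y j) (x j) (y i)) - 2 * ∑ i, T.R (x i) (y i) (x i) (y i)) := by
  have moment : ∀ i j k l, ∑ σ : ι → Bool,
      boolSign (σ i) * boolSign (σ j) * boolSign (σ k) * boolSign (σ l) * T.R (x i) (y j) (x k) (y l) =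
      2 ^ Fintype.card ι * ((if i = j ∧ k = l then T.R (x i) (y j) (x k) (y l) else 0) +
        (if i = k ∧ j = l then T.R (x i) (y j) (x k) (y l) else 0) +
        (if i = l ∧ j = k then T.R (x i) (y j) (x k) (y l) else 0) -
        2 * (if i = j ∧ i = k ∧ i = l then T.R (x i) (y j) (x k) (y l) else 0)) := by
    intro i j k l
    rw [← Finset.sum_mul, sum_boolSign_mul_four]
    by_cases hij : i = j <;> by_cases hik : i = k <;> by_cases hil : i = l <;>
      by_cases hjk : j = k <;> by_cases hjl : j = l <;> by_cases hkl : k = l <;> simp_all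
    all_goals ring
  simp only [T.R_sum_smul]
  simp_rw [Finset.sum_comm (γ := ι → Bool), moment]
  simp only [Finset.sum_add_distrib, Finset.sum_sub_distrib, ← Finset.mul_sum, ite_and,
    Finset.sum_ite_eq, Finset.sum_ite_irrel, Finset.sum_const_zero, Finset.mem_univ, if_true]

variable (J : E →ₗ[ℝ] E)

def holSect (v : E) : ℝ := T.R v (J v) v (J v)

theorem holSect_smul (c : ℝ) (v : E) : T.holSect J (c • v) = c ^ 4 * T.holSect J v := by
  simp only [holSect, map_smul, T.smul_fst, T.smul_snd, T.smul_trd, T.smul_fth]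
  ring

@[simp]
theorem holSect_zero : T.holSect J 0 = 0 := by
  simpa using T.holSect_smul J 0 0

theorem holSect_eq_norm_pow_mul (v : E) :
    T.holSect J v = ‖v‖ ^ 4 * T.holSect J (‖v‖⁻¹ • v) := by
  rcases eq_or_ne v 0 with rfl | hv
  · simp
  · rw [holSect_smul, ← mul_assoc, ← mul_pow, mul_inv_cancel₀ (norm_ne_zero_iff.2 hv), one_pow,
      one_mul]

variable {T J} {c : ℝ}

theorem holSect_le_of_forall_norm_eq_one (h : ∀ v, ‖v‖ = 1 → T.holSect J v ≤ c) (v : E) :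
    T.holSect J v ≤ ‖v‖ ^ 4 * c := by
  rcases eq_or_ne v 0 with rfl | hv
  · simp
  · rw [T.holSect_eq_norm_pow_mul]
    exact mul_le_mul_of_nonneg_left (h _ (norm_smul_inv_norm hv)) (by positivity)

theorem le_holSect_of_forall_norm_eq_one (h : ∀ v, ‖v‖ = 1 → c ≤ T.holSect J v) (v : E) :
    ‖v‖ ^ 4 * c ≤ T.holSect J v := by
  rcases eq_or_ne v 0 with rfl | hv
  · simp
  · rw [T.holSect_eq_norm_pow_mul]
    exact mul_le_mul_of_nonneg_left (h _ (norm_smul_inv_norm hv)) (by positivity)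

theorem norm_sum_boolSign_smul_sq (f : OrthonormalBasis ι ℝ E) (σ : ι → Bool) :
    ‖∑ i, boolSign (σ i) • f i‖ ^ 2 = Fintype.card ι := by
  rw [← real_inner_self_eq_norm_sq, f.orthonormal.inner_sum]
  simp

theorem sum_holSect_boolSign_smul [DecidableEq ι] (hJ : IsOrthCplxStructure J)
    (f : OrthonormalBasis ι ℝ E) :
    ∑ σ : ι → Bool, T.holSect J (∑ i, boolSign (σ i) • f i) =
      2 ^ Fintype.card ι *
        (3 * T.starScalarCurvOf J f + T.scalarCurvOf f - 2 * ∑ i, T.holSect J (f i)) := by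
  simp only [holSect, map_sum, map_smul]
  rw [T.sum_R_boolSign_smul, T.sum_sum_R_J_sym_eq hJ]

theorem holSect_apply_eq_of_pinched (hJ : IsOrthCplxStructure J) (f : OrthonormalBasis ι ℝ E)
    {c : ℝ} (hc : (Fintype.card ι : ℝ) * (Fintype.card ι + 2) * c =
      3 * T.starScalarCurvOf J f + T.scalarCurvOf f)
    (hpinch : (∀ v, ‖v‖ = 1 → T.holSect J v ≤ c) ∨ (∀ v, ‖v‖ = 1 → c ≤ T.holSect J v))
    (i : ι) : T.holSect J (f i) = c := by
  classical
  set u : (ι → Bool) → E := fun σ => ∑ i, boolSign (σ i) • f i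
  have hu : ∀ σ, ‖u σ‖ ^ 4 = (Fintype.card ι : ℝ) ^ 2 := fun σ => by
    rw [show 4 = 2 * 2 from rfl, pow_mul, norm_sum_boolSign_smul_sq]
  have balance : ∑ i, 2 * (c - T.holSect J (f i)) +
      ∑ σ, (‖u σ‖ ^ 4 * c - T.holSect J (u σ)) / 2 ^ Fintype.card ι = 0 := by
    simp only [hu, ← Finset.sum_div, Finset.sum_sub_distrib, ← Finset.mul_sum]
    rw [T.sum_holSect_boolSign_smul hJ f]
    simp only [Finset.sum_const, Finset.card_univ, nsmul_eq_mul, Fintype.card_pi,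
      Fintype.card_bool, Finset.prod_const, Nat.cast_pow, Nat.cast_ofNat]
    field_simp
    linear_combination hc
  have key := eq_zero_of_sum_add_sum_eq_zero balance ?_ i
  · linarith
  rcases hpinch with h | h
  · refine .inl ⟨fun i => by linarith [h (f i) (f.orthonormal.1 i)], fun σ => ?_⟩
    have := holSect_le_of_forall_norm_eq_one h (u σ)
    exact div_nonneg (by linarith) (by positivity)
  · refine .inr ⟨fun i => by linarith [h (f i) (f.orthonormal.1 i)], fun σ => ?_⟩
    have := le_holSect_of_forall_norm_eq_one h (u σ)
    exact div_nonpos_of_nonpos_of_nonneg (by linarith) (by positivity)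

theorem holSect_eq_of_pinched (hJ : IsOrthCplxStructure J) (f : OrthonormalBasis ι ℝ E)
    (hpinch : (∀ v, ‖v‖ = 1 → T.holSect J v ≤ (3 * T.starScalarCurvOf J f + T.scalarCurvOf f) /
        (Fintype.card ι * (Fintype.card ι + 2))) ∨
      (∀ v, ‖v‖ = 1 → (3 * T.starScalarCurvOf J f + T.scalarCurvOf f) /
        (Fintype.card ι * (Fintype.card ι + 2)) ≤ T.holSect J v))
    (v : E) (hv : ‖v‖ = 1) : T.holSect J v =
      (3 * T.starScalarCurvOf J f + T.scalarCurvOf f) / (Fintype.card ι * (Fintype.card ι + 2)) := by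
  obtain ⟨g, i, rfl⟩ := f.exists_apply_eq_of_norm_eq_one hv
  have : 0 < Fintype.card ι := Fintype.card_pos_iff.2 ⟨i⟩
  rw [T.starScalarCurvOf_eq J f g, T.scalarCurvOf_eq f g] at hpinch ⊢
  exact holSect_apply_eq_of_pinched hJ g (by field_simp) hpinch i

end AlgCurvatureTensor

theorem holSectCurv_pinched_eq_almostHermitian_general (N : ℕ)
    (J : EuclideanSpace ℝ (Fin (2 * N)) →ₗ[ℝ] EuclideanSpace ℝ (Fin (2 * N)))
    (hJ : IsOrthCplxStructure J)
    (T : AlgCurvatureTensor (EuclideanSpace ℝ (Fin (2 * N))))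
    (hpinch :
      (∀ v : EuclideanSpace ℝ (Fin (2 * N)), ‖v‖ = 1 →
        T.R v (J v) v (J v)
          ≤ (3 * starScalarCurv T J + scalarCurv T) / (4 * (N : ℝ) * ((N : ℝ) + 1))) ∨
      (∀ v : EuclideanSpace ℝ (Fin (2 * N)), ‖v‖ = 1 →
        T.R v (J v) v (J v)
          ≥ (3 * starScalarCurv T J + scalarCurv T) / (4 * (N : ℝ) * ((N : ℝ) + 1)))) :
    ∀ v : EuclideanSpace ℝ (Fin (2 * N)), ‖v‖ = 1 →
      T.R v (J v) v (J v)
        = (3 * starScalarCurv T J + scalarCurv T) / (4 * (N : ℝ) * ((N : ℝ) + 1)) := by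
  have hdim : 4 * (N : ℝ) * ((N : ℝ) + 1) =
      Fintype.card (Fin (2 * N)) * (Fintype.card (Fin (2 * N)) + 2) := by
    push_cast [Fintype.card_fin]
    ring
  rw [hdim, starScalarCurv_eq_starScalarCurvOf, scalarCurv_eq_scalarCurvOf] at hpinch ⊢
  exact T.holSect_eq_of_pinched hJ _ hpinch

/-- For any algebraic curvature tensor on `ℝ^{2N}` with orthogonal complex
structure `J`, if `H(v) ≤ (3s* + s)/(4N(N+1))` for every unit vector `v` (or `≥` for
every unit vector), then `H(v) = (3s* + s)/(4N(N+1))` for every unit vector `v`. -/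
theorem holSectCurv_pinched_eq_almostHermitian (N : ℕ) (hN : 1 ≤ N)
    (J : EuclideanSpace ℝ (Fin (2 * N)) →ₗ[ℝ] EuclideanSpace ℝ (Fin (2 * N)))
    (hJ : IsOrthCplxStructure J)
    (T : AlgCurvatureTensor (EuclideanSpace ℝ (Fin (2 * N))))
    (hpinch :
      (∀ v : EuclideanSpace ℝ (Fin (2 * N)), ‖v‖ = 1 →
        T.R v (J v) v (J v)
          ≤ (3 * starScalarCurv T J + scalarCurv T) / (4 * (N : ℝ) * ((N : ℝ) + 1))) ∨
      (∀ v : EuclideanSpace ℝ (Fin (2 * N)), ‖v‖ = 1 →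
        T.R v (J v) v (J v)
          ≥ (3 * starScalarCurv T J + scalarCurv T) / (4 * (N : ℝ) * ((N : ℝ) + 1)))) :
    ∀ v : EuclideanSpace ℝ (Fin (2 * N)), ‖v‖ = 1 →
      T.R v (J v) v (J v)
        = (3 * starScalarCurv T J + scalarCurv T) / (4 * (N : ℝ) * ((N : ℝ) + 1)) :=
  holSectCurv_pinched_eq_almostHermitian_general N J hJ T hpinch
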